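/- Let 𝓗=(𝓗_L,𝓗_R,S) be a Hopf algebroid. The total algebra H is a right 𝓗_R-comodule algebra via the coproduct γ_R, its coinvariant subalgebra is t_R(R), and the canonical map can_R: H⊗_{R^op} H → H⊗_R H, h⊗h' ↦ h·h'^{(1)}⊗h'^{(2)}, is bijective with inverse h⊗h' ↦ h·S(h'_{(1)})⊗h'_{(2)}. That is, the extension t_R: R^op → H is 𝓗_R-Galois. -/
import Mathlib


open scoped TensorProduct

noncomputable section

namespace HopfAlgd

variable (k : Type*) [CommRing k]

/-- The `k`-submodule of balancing relations inside a `k`-tensor product, generated by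
elements `ρ x m ⊗ n - m ⊗ lam x n`.  Quotienting by it produces the balanced tensor
product of a right module and a left module over a (possibly noncommutative) base. -/
def rel {X M N : Type*} [AddCommGroup M] [AddCommGroup N] [Module k M] [Module k N]
    (ρ : X → M → M) (lam : X → N → N) : Submodule k (M ⊗[k] N) :=
  Submodule.span k {z | ∃ x m n, z = ρ x m ⊗ₜ[k] n - m ⊗ₜ[k] lam x n}

/-- Data underlying a left bialgebroid over `L` with total algebra `H`:
source `s`, target `t`, a `k`-linear lift `Δ` of the coproduct and the counit `ε`. -/
structure LBgd (L H : Type*) [Ring L] [Ring H] [Algebra k L] [Algebra k H] where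
  s : L →ₗ[k] H
  t : L →ₗ[k] H
  Δ : H →ₗ[k] H ⊗[k] H
  ε : H →ₗ[k] L

/-- Data underlying a right bialgebroid over `R` with total algebra `H`. -/
structure RBgd (R H : Type*) [Ring R] [Ring H] [Algebra k R] [Algebra k H] where
  s : R →ₗ[k] H
  t : R →ₗ[k] H
  Δ : H →ₗ[k] H ⊗[k] H
  ε : H →ₗ[k] R

variable {k}
variable {L R H : Type*} [Ring L] [Ring R] [Ring H]
  [Algebra k L] [Algebra k R] [Algebra k H]

namespace LBgd

variable (D : LBgd k L H)

/-- Balancing relations for `H_L ⊗_L {}_L H` : `t(l)h ⊗ h' ∼ h ⊗ s(l)h'`. -/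
def relL : Submodule k (H ⊗[k] H) :=
  rel k (fun l h => D.t l * h) (fun l h => D.s l * h)

/-- Contraction `x ⊗ y ↦ s(ε x) * y`. -/
def cS : H ⊗[k] H →ₗ[k] H :=
  TensorProduct.lift ((LinearMap.mul k H).comp (D.s.comp D.ε))

/-- Contraction `x ⊗ y ↦ t(ε y) * x`. -/
def cT : H ⊗[k] H →ₗ[k] H :=
  TensorProduct.lift (((LinearMap.mul k H).comp (D.t.comp D.ε)).flip)

/-- Relations in the triple tensor product `H ⊗_L H ⊗_L H`. -/
def rel3 : Submodule k (H ⊗[k] (H ⊗[k] H)) :=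
  Submodule.span k
    ({z | ∃ l x y w, z = (D.t l * x) ⊗ₜ[k] (y ⊗ₜ[k] w) - x ⊗ₜ[k] ((D.s l * y) ⊗ₜ[k] w)} ∪
     {z | ∃ l x y w, z = x ⊗ₜ[k] ((D.t l * y) ⊗ₜ[k] w) - x ⊗ₜ[k] (y ⊗ₜ[k] (D.s l * w))})

end LBgd

/-- The axioms of a left bialgebroid, stated for the lifted structure maps modulo the
balancing relations. -/
structure IsLBgd (D : LBgd k L H) : Prop where
  s_one : D.s 1 = 1
  s_mul : ∀ a b, D.s (a * b) = D.s a * D.s b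
  t_one : D.t 1 = 1
  t_mul : ∀ a b, D.t (a * b) = D.t b * D.t a
  st_comm : ∀ a b, D.s a * D.t b = D.t b * D.s a
  ε_one : D.ε 1 = 1
  ε_bimod : ∀ l l' h, D.ε (D.s l * D.t l' * h) = l * D.ε h * l'
  ε_ms : ∀ h h', D.ε (h * D.s (D.ε h')) = D.ε (h * h')
  ε_mt : ∀ h h', D.ε (h * D.t (D.ε h')) = D.ε (h * h')
  Δ_one : D.Δ 1 - 1 ⊗ₜ[k] 1 ∈ D.relL
  Δ_mul : ∀ h h', D.Δ (h * h') - D.Δ h * D.Δ h' ∈ D.relL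
  Δ_s : ∀ l h, D.Δ (D.s l * h) - (D.s l ⊗ₜ[k] 1) * D.Δ h ∈ D.relL
  Δ_t : ∀ l h, D.Δ (D.t l * h) - (1 ⊗ₜ[k] D.t l) * D.Δ h ∈ D.relL
  takeuchi : ∀ h l, D.Δ h * (D.t l ⊗ₜ[k] 1) - D.Δ h * (1 ⊗ₜ[k] D.s l) ∈ D.relL
  counit_s : ∀ h, D.cS (D.Δ h) = h
  counit_t : ∀ h, D.cT (D.Δ h) = h
  coassoc : ∀ h,
    (TensorProduct.assoc k H H H) ((TensorProduct.map D.Δ LinearMap.id) (D.Δ h))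
      - (TensorProduct.map LinearMap.id D.Δ) (D.Δ h) ∈ D.rel3

namespace RBgd

variable (D : RBgd k R H)

/-- Balancing relations for `H^R ⊗_R {}^R H` : `h s(r) ⊗ h' ∼ h ⊗ h' t(r)`. -/
def relR : Submodule k (H ⊗[k] H) :=
  rel k (fun r h => h * D.s r) (fun r h => h * D.t r)

/-- Contraction `x ⊗ y ↦ x * s(ε y)`. -/
def cS : H ⊗[k] H →ₗ[k] H :=
  TensorProduct.lift (((LinearMap.mul k H).flip.comp (D.s.comp D.ε)).flip)

/-- Contraction `x ⊗ y ↦ y * t(ε x)`. -/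
def cT : H ⊗[k] H →ₗ[k] H :=
  TensorProduct.lift ((LinearMap.mul k H).flip.comp (D.t.comp D.ε))

/-- Relations in the triple tensor product `H ⊗_R H ⊗_R H`. -/
def rel3 : Submodule k (H ⊗[k] (H ⊗[k] H)) :=
  Submodule.span k
    ({z | ∃ r x y w, z = (x * D.s r) ⊗ₜ[k] (y ⊗ₜ[k] w) - x ⊗ₜ[k] ((y * D.t r) ⊗ₜ[k] w)} ∪
     {z | ∃ r x y w, z = x ⊗ₜ[k] ((y * D.s r) ⊗ₜ[k] w) - x ⊗ₜ[k] (y ⊗ₜ[k] (w * D.t r))})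

end RBgd

/-- The axioms of a right bialgebroid. -/
structure IsRBgd (D : RBgd k R H) : Prop where
  s_one : D.s 1 = 1
  s_mul : ∀ a b, D.s (a * b) = D.s a * D.s b
  t_one : D.t 1 = 1
  t_mul : ∀ a b, D.t (a * b) = D.t b * D.t a
  st_comm : ∀ a b, D.s a * D.t b = D.t b * D.s a
  ε_one : D.ε 1 = 1
  ε_bimod : ∀ r r' h, D.ε (h * D.t r * D.s r') = r * D.ε h * r'
  ε_ms : ∀ h h', D.ε (D.s (D.ε h) * h') = D.ε (h * h')
  ε_mt : ∀ h h', D.ε (D.t (D.ε h) * h') = D.ε (h * h')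
  Δ_one : D.Δ 1 - 1 ⊗ₜ[k] 1 ∈ D.relR
  Δ_mul : ∀ h h', D.Δ (h * h') - D.Δ h * D.Δ h' ∈ D.relR
  Δ_s : ∀ r h, D.Δ (h * D.s r) - D.Δ h * (1 ⊗ₜ[k] D.s r) ∈ D.relR
  Δ_t : ∀ r h, D.Δ (h * D.t r) - D.Δ h * (D.t r ⊗ₜ[k] 1) ∈ D.relR
  takeuchi : ∀ h r, (D.t r ⊗ₜ[k] 1) * D.Δ h - (1 ⊗ₜ[k] D.s r) * D.Δ h ∈ D.relR
  counit_s : ∀ h, D.cS (D.Δ h) = h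
  counit_t : ∀ h, D.cT (D.Δ h) = h
  coassoc : ∀ h,
    (TensorProduct.assoc k H H H) ((TensorProduct.map D.Δ LinearMap.id) (D.Δ h))
      - (TensorProduct.map LinearMap.id D.Δ) (D.Δ h) ∈ D.rel3

variable (k)

/-- Data of a Hopf algebroid: a left bialgebroid over `L`, a right bialgebroid over `R`,
both with total algebra `H`, and a `k`-linear antipode. -/
structure HopfData (L R H : Type*) [Ring L] [Ring R] [Ring H]
    [Algebra k L] [Algebra k R] [Algebra k H] where
  bL : LBgd k L H
  bR : RBgd k R H
  anti : H →ₗ[k] H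

variable {k}

namespace HopfData

variable (D : HopfData k L R H)

/-- Mixed relations in `H_L ⊗_L H^R ⊗_R {}^R H`. -/
def relLR3 : Submodule k (H ⊗[k] (H ⊗[k] H)) :=
  Submodule.span k
    ({z | ∃ l x y w, z = (D.bL.t l * x) ⊗ₜ[k] (y ⊗ₜ[k] w) - x ⊗ₜ[k] ((D.bL.s l * y) ⊗ₜ[k] w)} ∪
     {z | ∃ r x y w, z = x ⊗ₜ[k] ((y * D.bR.s r) ⊗ₜ[k] w) - x ⊗ₜ[k] (y ⊗ₜ[k] (w * D.bR.t r))})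

/-- Mixed relations in `H^R ⊗_R {}^R H_L ⊗_L {}_L H`. -/
def relRL3 : Submodule k (H ⊗[k] (H ⊗[k] H)) :=
  Submodule.span k
    ({z | ∃ r x y w, z = (x * D.bR.s r) ⊗ₜ[k] (y ⊗ₜ[k] w) - x ⊗ₜ[k] ((y * D.bR.t r) ⊗ₜ[k] w)} ∪
     {z | ∃ l x y w, z = x ⊗ₜ[k] ((D.bL.t l * y) ⊗ₜ[k] w) - x ⊗ₜ[k] (y ⊗ₜ[k] (D.bL.s l * w))})

end HopfData

/-- The Hopf algebroid axioms. -/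
structure IsHopf (D : HopfData k L R H) : Prop where
  isL : IsLBgd D.bL
  isR : IsRBgd D.bR
  comp1 : ∀ r, D.bL.s (D.bL.ε (D.bR.t r)) = D.bR.t r
  comp2 : ∀ r, D.bL.t (D.bL.ε (D.bR.s r)) = D.bR.s r
  comp3 : ∀ l, D.bR.s (D.bR.ε (D.bL.t l)) = D.bL.t l
  comp4 : ∀ l, D.bR.t (D.bR.ε (D.bL.s l)) = D.bL.s l
  mixed1 : ∀ h,
    (TensorProduct.assoc k H H H) ((TensorProduct.map D.bL.Δ LinearMap.id) (D.bR.Δ h))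
      - (TensorProduct.map LinearMap.id D.bR.Δ) (D.bL.Δ h) ∈ D.relLR3
  mixed2 : ∀ h,
    (TensorProduct.assoc k H H H) ((TensorProduct.map D.bR.Δ LinearMap.id) (D.bL.Δ h))
      - (TensorProduct.map LinearMap.id D.bL.Δ) (D.bR.Δ h) ∈ D.relRL3
  anti_tL : ∀ l h, D.anti (D.bL.t l * h) = D.anti h * D.bL.s l
  anti_tL' : ∀ l h, D.anti (h * D.bL.t l) = D.bL.s l * D.anti h
  anti_tR : ∀ r h, D.anti (D.bR.t r * h) = D.anti h * D.bR.s r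
  anti_tR' : ∀ r h, D.anti (h * D.bR.t r) = D.bR.s r * D.anti h
  anti_left : ∀ h,
    (LinearMap.mul' k H) ((TensorProduct.map D.anti LinearMap.id) (D.bL.Δ h))
      = D.bR.s (D.bR.ε h)
  anti_right : ∀ h,
    (LinearMap.mul' k H) ((TensorProduct.map LinearMap.id D.anti) (D.bR.Δ h))
      = D.bL.s (D.bL.ε h)

namespace HopfData

variable (D : HopfData k L R H)

/-- `H^R` (the right `R`-module `h·r = h s_R(r)`) is finitely generated projective,
expressed by a finite dual basis. -/
def fgprojSR : Prop :=
  ∃ (n : ℕ) (b : Fin n → H) (f : Fin n → (H →ₗ[k] R)),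
    (∀ i r h, f i (h * D.bR.s r) = f i h * r) ∧
    ∀ h, (∑ i, b i * D.bR.s (f i h)) = h

/-- `^R H` (the left `R`-module `r·h = h t_R(r)`) is finitely generated projective. -/
def fgprojTR : Prop :=
  ∃ (n : ℕ) (b : Fin n → H) (f : Fin n → (H →ₗ[k] R)),
    (∀ i r h, f i (h * D.bR.t r) = r * f i h) ∧
    ∀ h, (∑ i, b i * D.bR.t (f i h)) = h

/-- `H_L` (the right `L`-module `h·l = t_L(l) h`) is finitely generated projective. -/
def fgprojTL : Prop :=
  ∃ (n : ℕ) (b : Fin n → H) (f : Fin n → (H →ₗ[k] L)),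
    (∀ i l h, f i (D.bL.t l * h) = f i h * l) ∧
    ∀ h, (∑ i, D.bL.t (f i h) * b i) = h

/-- `_L H` (the left `L`-module `l·h = s_L(l) h`) is finitely generated projective. -/
def fgprojSL : Prop :=
  ∃ (n : ℕ) (b : Fin n → H) (f : Fin n → (H →ₗ[k] L)),
    (∀ i l h, f i (D.bL.s l * h) = l * f i h) ∧
    ∀ h, (∑ i, D.bL.s (f i h) * b i) = h

/-- A finitely generated projective Hopf algebroid: all four module structures on `H`
over the base algebras are finitely generated and projective. -/
def FGProj : Prop := D.fgprojSR ∧ D.fgprojTR ∧ D.fgprojTL ∧ D.fgprojSL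

/-- `Sinv` is a two-sided inverse of the antipode (bijectivity of the antipode). -/
def AntiInv (Sinv : H →ₗ[k] H) : Prop :=
  (∀ h, D.anti (Sinv h) = h) ∧ ∀ h, Sinv (D.anti h) = h

end HopfData

end HopfAlgd
namespace HopfAlgd

variable {k : Type*} [CommRing k]
variable {L R H : Type*} [Ring L] [Ring R] [Ring H]
  [Algebra k L] [Algebra k R] [Algebra k H]

variable (k R H) in
/-- Data of a right comodule over the `R`-coring underlying a right bialgebroid:
a right `R`-action `ar` (written `ar r m = m·r`) and a `k`-linear lift `τ` of the
coaction. -/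
structure RComodData (M : Type*) [AddCommGroup M] [Module k M] where
  ar : R →ₗ[k] M →ₗ[k] M
  τ : M →ₗ[k] M ⊗[k] H

namespace RComodData

variable {M : Type*} [AddCommGroup M] [Module k M]
variable (D : RBgd k R H) (C : RComodData k R H M)

/-- Balancing relations of `M^R ⊗_R {}^R H`. -/
def relM : Submodule k (M ⊗[k] H) :=
  rel k (fun r m => C.ar r m) (fun r h => h * D.t r)

/-- Contraction `m ⊗ h ↦ m · ε(h)`. -/
def cM : M ⊗[k] H →ₗ[k] M :=
  TensorProduct.lift ((C.ar.comp D.ε).flip)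

/-- Mixed relations in `M ⊗_R H ⊗_R H`. -/
def relM3 : Submodule k (M ⊗[k] (H ⊗[k] H)) :=
  Submodule.span k
    ({z | ∃ r m x y, z = (C.ar r m) ⊗ₜ[k] (x ⊗ₜ[k] y) - m ⊗ₜ[k] ((x * D.t r) ⊗ₜ[k] y)} ∪
     {z | ∃ r m x y, z = m ⊗ₜ[k] ((x * D.s r) ⊗ₜ[k] y) - m ⊗ₜ[k] (x ⊗ₜ[k] (y * D.t r))})

/-- The coinvariants `{m | τ(m) = m ⊗ 1}` as a `k`-submodule. -/
def coinv : Submodule k M :=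
  Submodule.comap (C.τ - (TensorProduct.mk k M H).flip 1) (C.relM D)

end RComodData

/-- The axioms of a right comodule of the `R`-coring of a right bialgebroid. -/
structure IsRComod (D : RBgd k R H) {M : Type*} [AddCommGroup M] [Module k M]
    (C : RComodData k R H M) : Prop where
  ar_one : ∀ m, C.ar 1 m = m
  ar_mul : ∀ r r' m, C.ar (r * r') m = C.ar r' (C.ar r m)
  counit : ∀ m, C.cM D (C.τ m) = m
  rlin : ∀ r m, C.τ (C.ar r m)
      - (TensorProduct.map LinearMap.id (LinearMap.mulRight k (D.s r))) (C.τ m) ∈ C.relM D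
  coassoc : ∀ m,
    (TensorProduct.assoc k M H H) ((TensorProduct.map C.τ LinearMap.id) (C.τ m))
      - (TensorProduct.map LinearMap.id D.Δ) (C.τ m) ∈ C.relM3 D

variable (k L H) in
/-- Data of a right comodule over the `L`-coring underlying a left bialgebroid. -/
structure LComodData (M : Type*) [AddCommGroup M] [Module k M] where
  al : L →ₗ[k] M →ₗ[k] M
  τ : M →ₗ[k] M ⊗[k] H

namespace LComodData

variable {M : Type*} [AddCommGroup M] [Module k M]
variable (D : LBgd k L H) (C : LComodData k L H M)

/-- Balancing relations of `M^L ⊗_L {}_L H`. -/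
def relM : Submodule k (M ⊗[k] H) :=
  rel k (fun l m => C.al l m) (fun l h => D.s l * h)

/-- Contraction `m ⊗ h ↦ m · ε(h)`. -/
def cM : M ⊗[k] H →ₗ[k] M :=
  TensorProduct.lift ((C.al.comp D.ε).flip)

/-- Mixed relations in `M ⊗_L H ⊗_L H`. -/
def relM3 : Submodule k (M ⊗[k] (H ⊗[k] H)) :=
  Submodule.span k
    ({z | ∃ l m x y, z = (C.al l m) ⊗ₜ[k] (x ⊗ₜ[k] y) - m ⊗ₜ[k] ((D.s l * x) ⊗ₜ[k] y)} ∪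
     {z | ∃ l m x y, z = m ⊗ₜ[k] ((D.t l * x) ⊗ₜ[k] y) - m ⊗ₜ[k] (x ⊗ₜ[k] (D.s l * y))})

/-- The coinvariants `{m | τ(m) = m ⊗ 1}` as a `k`-submodule. -/
def coinv : Submodule k M :=
  Submodule.comap (C.τ - (TensorProduct.mk k M H).flip 1) (C.relM D)

/-- The induced left `L`-action `l·m = m⟨0⟩ · ε(m⟨1⟩ s(l))` on a right comodule. -/
def indL (l : L) : M →ₗ[k] M :=
  (TensorProduct.lift (((C.al.comp (D.ε.comp (LinearMap.mulRight k (D.s l)))).flip))).comp C.τ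

end LComodData

/-- The axioms of a right comodule of the `L`-coring of a left bialgebroid. -/
structure IsLComod (D : LBgd k L H) {M : Type*} [AddCommGroup M] [Module k M]
    (C : LComodData k L H M) : Prop where
  al_one : ∀ m, C.al 1 m = m
  al_mul : ∀ l l' m, C.al (l * l') m = C.al l' (C.al l m)
  counit : ∀ m, C.cM D (C.τ m) = m
  llin : ∀ l m, C.τ (C.al l m)
      - (TensorProduct.map LinearMap.id (LinearMap.mulLeft k (D.t l))) (C.τ m) ∈ C.relM D
  coassoc : ∀ m,
    (TensorProduct.assoc k M H H) ((TensorProduct.map C.τ LinearMap.id) (C.τ m))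
      - (TensorProduct.map LinearMap.id D.Δ) (C.τ m) ∈ C.relM3 D

variable (k L R H) in
/-- Data of a right comodule of a Hopf algroid: compatible comodule data over both
constituent bialgebroids. -/
structure HComodData (M : Type*) [AddCommGroup M] [Module k M] where
  right : RComodData k R H M
  left : LComodData k L H M

namespace HComodData

variable {M : Type*} [AddCommGroup M] [Module k M]
variable (D : HopfData k L R H) (C : HComodData k L R H M)

/-- The induced left `R`-action `r·m = m⟨0⟩ · ε(s(r) m⟨1⟩)` coming from the right
bialgebroid coaction. -/
def indR (r : R) : M →ₗ[k] M :=
  (TensorProduct.lift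
    (((C.right.ar.comp (D.bR.ε.comp (LinearMap.mulLeft k (D.bR.s r)))).flip))).comp C.right.τ

/-- Mixed relations in `M ⊗_R H_L ⊗_L {}_L H`. -/
def relMixR : Submodule k (M ⊗[k] (H ⊗[k] H)) :=
  Submodule.span k
    ({z | ∃ r m x y, z = (C.right.ar r m) ⊗ₜ[k] (x ⊗ₜ[k] y) - m ⊗ₜ[k] ((x * D.bR.t r) ⊗ₜ[k] y)} ∪
     {z | ∃ l m x y, z = m ⊗ₜ[k] ((D.bL.t l * x) ⊗ₜ[k] y) - m ⊗ₜ[k] (x ⊗ₜ[k] (D.bL.s l * y))})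

/-- Mixed relations in `M ⊗_L H^R ⊗_R {}^R H`. -/
def relMixL : Submodule k (M ⊗[k] (H ⊗[k] H)) :=
  Submodule.span k
    ({z | ∃ l m x y, z = (C.left.al l m) ⊗ₜ[k] (x ⊗ₜ[k] y) - m ⊗ₜ[k] ((D.bL.s l * x) ⊗ₜ[k] y)} ∪
     {z | ∃ r m x y, z = m ⊗ₜ[k] ((x * D.bR.s r) ⊗ₜ[k] y) - m ⊗ₜ[k] (x ⊗ₜ[k] (y * D.bR.t r))})

end HComodData

/-- The axioms of a right comodule of a Hopf algebroid: both constituent comodule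
structures, the compatibility of the bimodule structures, and mutual colinearity of
the two coactions. -/
structure IsHComod (D : HopfData k L R H) {M : Type*} [AddCommGroup M] [Module k M]
    (C : HComodData k L R H M) : Prop where
  isR : IsRComod D.bR C.right
  isL : IsLComod D.bL C.left
  bimod : ∀ l l' m, C.left.indL D.bL l (C.left.al l' m)
      = C.right.ar (D.bR.ε (D.bL.t l)) (C.indR D (D.bR.ε (D.bL.t l')) m)
  colin1 : ∀ m,
    (TensorProduct.assoc k M H H) ((TensorProduct.map C.right.τ LinearMap.id) (C.left.τ m))
      - (TensorProduct.map LinearMap.id D.bL.Δ) (C.right.τ m) ∈ C.relMixR D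
  colin2 : ∀ m,
    (TensorProduct.assoc k M H H) ((TensorProduct.map C.left.τ LinearMap.id) (C.right.τ m))
      - (TensorProduct.map LinearMap.id D.bR.Δ) (C.left.τ m) ∈ C.relMixL D

section ComodAlg

variable {A : Type*} [Ring A] [Algebra k A]

/-- The axioms of a right comodule algebra of a right bialgebroid: the comodule axioms
together with unitality and multiplicativity of the coaction.  The fields `coinv_mul`
and `centr` are consequences of the axioms in the classical formulation, recorded here
so that the subalgebra of coinvariants and the canonical map are well defined. -/
structure IsRComodAlg (D : RBgd k R H) (C : RComodData k R H A) : Prop where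
  isCom : IsRComod D C
  coact_one : C.τ 1 - 1 ⊗ₜ[k] 1 ∈ C.relM D
  coact_mul : ∀ a a', C.τ (a * a') - C.τ a * C.τ a' ∈ C.relM D
  ar_eq : ∀ r a, C.ar r a = a * C.ar r 1
  coinv_mul : ∀ a a', a ∈ C.coinv D → a' ∈ C.coinv D → a * a' ∈ C.coinv D
  centr : ∀ a a', a ∈ C.coinv D → C.τ (a * a') - (a ⊗ₜ[k] 1) * C.τ a' ∈ C.relM D

/-- The axioms of a right comodule algebra of a left bialgebroid. -/
structure IsLComodAlg (D : LBgd k L H) (C : LComodData k L H A) : Prop where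
  isCom : IsLComod D C
  coact_one : C.τ 1 - 1 ⊗ₜ[k] 1 ∈ C.relM D
  coact_mul : ∀ a a', C.τ (a * a') - C.τ a * C.τ a' ∈ C.relM D
  al_eq : ∀ l a, C.al l a = a * C.al l 1
  coinv_mul : ∀ a a', a ∈ C.coinv D → a' ∈ C.coinv D → a * a' ∈ C.coinv D
  centr : ∀ a a', a' ∈ C.coinv D → C.τ (a * a') - C.τ a * (a' ⊗ₜ[k] 1) ∈ C.relM D

/-- The axioms of a right comodule algebra of a Hopf algebroid. -/
structure IsHComodAlg (D : HopfData k L R H) (C : HComodData k L R H A) : Prop where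
  isH : IsHComod D C
  isRAlg : IsRComodAlg D.bR C.right
  isLAlg : IsLComodAlg D.bL C.left

variable (k) in
/-- The balancing relations over a subset `B ⊆ A` inside `A ⊗ₖ A`; the quotient is
`A ⊗_B A`. -/
def relOver (B : Set A) : Submodule k (A ⊗[k] A) :=
  Submodule.span k {z | ∃ b ∈ B, ∃ a a', z = (a * b) ⊗ₜ[k] a' - a ⊗ₜ[k] (b * a')}

/-- `f` is the canonical map `A ⊗_B A → A ⊗_R H`, `a ⊗ a' ↦ a a'⁽⁰⁾ ⊗ a'⁽¹⁾` of the
right bialgebroid extension. -/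
def IsCanR (D : RBgd k R H) (C : RComodData k R H A) (B : Set A)
    (f : ((A ⊗[k] A) ⧸ relOver k B) →ₗ[k] ((A ⊗[k] H) ⧸ C.relM D)) : Prop :=
  ∀ a a', f ((relOver k B).mkQ (a ⊗ₜ[k] a'))
    = (C.relM D).mkQ ((TensorProduct.map (LinearMap.mulLeft k a) LinearMap.id) (C.τ a'))

/-- `f` is the canonical map `A ⊗_B A → A ⊗_L H`, `a ⊗ a' ↦ a⟨0⟩ a' ⊗ a⟨1⟩` of the
left bialgebroid extension. -/
def IsCanL (D : LBgd k L H) (C : LComodData k L H A) (B : Set A)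
    (f : ((A ⊗[k] A) ⧸ relOver k B) →ₗ[k] ((A ⊗[k] H) ⧸ C.relM D)) : Prop :=
  ∀ a a', f ((relOver k B).mkQ (a ⊗ₜ[k] a'))
    = (C.relM D).mkQ (C.τ a * (a' ⊗ₜ[k] 1))

/-- The extension `B ⊆ A` is Galois for the right bialgebroid: the canonical map is
bijective. -/
def IsGaloisR (D : RBgd k R H) (C : RComodData k R H A) (B : Set A) : Prop :=
  ∃ f, IsCanR D C B f ∧ Function.Bijective f

/-- The extension `B ⊆ A` is Galois for the left bialgebroid. -/
def IsGaloisL (D : LBgd k L H) (C : LComodData k L H A) (B : Set A) : Prop :=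
  ∃ f, IsCanL D C B f ∧ Function.Bijective f

/-- Membership in the coinvariants, unravelled. -/
lemma mem_coinv_iff (D : RBgd k R H) {M : Type*} [AddCommGroup M] [Module k M]
    (C : RComodData k R H M) (m : M) :
    m ∈ C.coinv D ↔ C.τ m - m ⊗ₜ[k] 1 ∈ C.relM D := by
  rw [RComodData.coinv, Submodule.mem_comap]
  simp only [LinearMap.sub_apply, LinearMap.flip_apply, TensorProduct.mk_apply]

/-- Membership in the coinvariants, unravelled. -/
lemma mem_coinvL_iff (D : LBgd k L H) {M : Type*} [AddCommGroup M] [Module k M]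
    (C : LComodData k L H M) (m : M) :
    m ∈ C.coinv D ↔ C.τ m - m ⊗ₜ[k] 1 ∈ C.relM D := by
  rw [LComodData.coinv, Submodule.mem_comap]
  simp only [LinearMap.sub_apply, LinearMap.flip_apply, TensorProduct.mk_apply]

lemma algebraMap_mem_coinv (D : RBgd k R H) (C : RComodData k R H A)
    (hC : IsRComodAlg D C) (c : k) : algebraMap k A c ∈ C.coinv D := by
  rw [Algebra.algebraMap_eq_smul_one]
  exact Submodule.smul_mem _ c ((mem_coinv_iff D C 1).2 hC.coact_one)

lemma algebraMap_mem_coinvL (D : LBgd k L H) (C : LComodData k L H A)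
    (hC : IsLComodAlg D C) (c : k) : algebraMap k A c ∈ C.coinv D := by
  rw [Algebra.algebraMap_eq_smul_one]
  exact Submodule.smul_mem _ c ((mem_coinvL_iff D C 1).2 hC.coact_one)

/-- The coinvariants of a right comodule algebra of a right bialgebroid, as a
subalgebra of `A`. -/
def coinvAlgR (D : RBgd k R H) (C : RComodData k R H A)
    (hC : IsRComodAlg D C) : Subalgebra k A where
  carrier := (C.coinv D : Set A)
  add_mem' := fun {_ _} ha hb => Submodule.add_mem (C.coinv D) ha hb
  mul_mem' := fun {a b} ha hb => hC.coinv_mul a b ha hb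
  one_mem' := (mem_coinv_iff D C 1).2 hC.coact_one
  algebraMap_mem' := fun c => algebraMap_mem_coinv D C hC c

/-- The coinvariants of a right comodule algebra of a left bialgebroid, as a
subalgebra of `A`. -/
def coinvAlgL (D : LBgd k L H) (C : LComodData k L H A)
    (hC : IsLComodAlg D C) : Subalgebra k A where
  carrier := (C.coinv D : Set A)
  add_mem' := fun {_ _} ha hb => Submodule.add_mem (C.coinv D) ha hb
  mul_mem' := fun {a b} ha hb => hC.coinv_mul a b ha hb
  one_mem' := (mem_coinvL_iff D C 1).2 hC.coact_one
  algebraMap_mem' := fun c => algebraMap_mem_coinvL D C hC c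

/-- The right `B`-module structure on `A` for a subalgebra `B ⊆ A`, given by right
multiplication (a module over the opposite ring `Bᵐᵒᵖ`). -/
def rightModuleStr (B : Subalgebra k A) : Module (↥B)ᵐᵒᵖ A :=
  Module.compHom A (RingHom.op ((Subalgebra.val B).toRingHom) : (↥B)ᵐᵒᵖ →+* Aᵐᵒᵖ)

end ComodAlg

end HopfAlgd

namespace HopfAlgd
section Aux
set_option linter.unusedSectionVars false
set_option synthInstance.maxHeartbeats 1000000
set_option maxHeartbeats 1000000
set_option linter.unnecessarySimpa false

variable {k : Type*} [CommRing k]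
variable {L R H : Type*} [Ring L] [Ring R] [Ring H]
  [Algebra k L] [Algebra k R] [Algebra k H]

private lemma memSpan {M N : Type*} [AddCommGroup M] [AddCommGroup N] [Module k M]
    [Module k N] (f : M →ₗ[k] N) {S : Set M} {W : Submodule k N}
    (h : ∀ z ∈ S, f z ∈ W) : ∀ z ∈ Submodule.span k S, f z ∈ W := by
  intro z hz
  have hle : Submodule.span k S ≤ W.comap f := Submodule.span_le.2 (fun s hs => h s hs)
  exact hle hz

private lemma memTensor {A B N : Type*} [AddCommGroup A] [AddCommGroup B] [AddCommGroup N]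
    [Module k A] [Module k B] [Module k N] (f : A ⊗[k] B →ₗ[k] N) {W : Submodule k N}
    (h : ∀ x y, f (x ⊗ₜ[k] y) ∈ W) : ∀ z, f z ∈ W := by
  intro z
  refine TensorProduct.induction_on z ?_ h ?_
  · simpa using W.zero_mem
  · intro u v hu hv; rw [map_add]; exact W.add_mem hu hv

variable (D : HopfData k L R H) (hD : IsHopf D)
include hD

private lemma relR_gen (r : R) (x y : H) :
    (x * D.bR.s r) ⊗ₜ[k] y - x ⊗ₜ[k] (y * D.bR.t r) ∈ D.bR.relR :=
  Submodule.subset_span ⟨r, x, y, rfl⟩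

private lemma relR_mul_left (u : H ⊗[k] H) {w : H ⊗[k] H} (hw : w ∈ D.bR.relR) :
    u * w ∈ D.bR.relR := by
  have key : ∀ z ∈ D.bR.relR, (LinearMap.mulLeft k u) z ∈ D.bR.relR := by
    refine memSpan _ ?_
    rintro z ⟨r, x, y, rfl⟩
    have h2 : ∀ v : H ⊗[k] H,
        (LinearMap.mulRight k ((x * D.bR.s r) ⊗ₜ[k] y - x ⊗ₜ[k] (y * D.bR.t r))) v
          ∈ D.bR.relR := by
      refine memTensor _ ?_
      intro p q
      simp only [LinearMap.mulRight_apply, mul_sub, Algebra.TensorProduct.tmul_mul_tmul,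
        ← mul_assoc]
      exact relR_gen D hD r (p*x) (q*y)
    simpa only [LinearMap.mulLeft_apply, LinearMap.mulRight_apply] using h2 u
  exact key w hw

private lemma cT_tmul (x y : H) : D.bR.cT (x ⊗ₜ[k] y) = y * D.bR.t (D.bR.ε x) := by
  simp [RBgd.cT, TensorProduct.lift.tmul, LinearMap.mul_apply']

private lemma eps_s (x : H) (r : R) : D.bR.ε (x * D.bR.s r) = D.bR.ε x * r := by
  have h := hD.isR.ε_bimod 1 r x
  simpa [hD.isR.t_one, hD.isR.ε_one] using h

private lemma eps_t_apply (r : R) : D.bR.ε (D.bR.t r) = r := by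
  have h := hD.isR.ε_bimod r 1 1
  simpa [hD.isR.s_one, hD.isR.ε_one] using h

private lemma cT_kill {w : H ⊗[k] H} (hw : w ∈ D.bR.relR) : D.bR.cT w = 0 := by
  have key : ∀ z ∈ D.bR.relR, D.bR.cT z ∈ (⊥ : Submodule k H) := by
    refine memSpan _ ?_
    rintro z ⟨r, x, y, rfl⟩
    simp only [map_sub, cT_tmul D hD, Submodule.mem_bot]
    rw [eps_s D hD, hD.isR.t_mul, ← mul_assoc]
    exact sub_self _
  simpa using key w hw

private lemma s_eq_t (r : R) : D.bR.s r = D.bR.t r := by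
  have h1 := hD.isR.takeuchi 1 r
  have h2 : (D.bR.t r ⊗ₜ[k] (1:H)) * (D.bR.Δ 1 - 1 ⊗ₜ[k] 1)
      - (1 ⊗ₜ[k] D.bR.s r) * (D.bR.Δ 1 - 1 ⊗ₜ[k] 1) ∈ D.bR.relR :=
    Submodule.sub_mem _ (relR_mul_left D hD _ hD.isR.Δ_one) (relR_mul_left D hD _ hD.isR.Δ_one)
  have h5 : (D.bR.t r ⊗ₜ[k] (1:H)) * D.bR.Δ 1 - (1 ⊗ₜ[k] D.bR.s r) * D.bR.Δ 1
      - ((D.bR.t r ⊗ₜ[k] (1:H)) * (D.bR.Δ 1 - 1 ⊗ₜ[k] 1)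
        - (1 ⊗ₜ[k] D.bR.s r) * (D.bR.Δ 1 - 1 ⊗ₜ[k] 1))
      = (D.bR.t r ⊗ₜ[k] (1:H)) - (1 ⊗ₜ[k] D.bR.s r) := by
    rw [mul_sub, mul_sub]
    simp only [Algebra.TensorProduct.tmul_mul_tmul, mul_one, one_mul]
    abel
  have h3 : (D.bR.t r ⊗ₜ[k] (1:H)) - (1 ⊗ₜ[k] D.bR.s r) ∈ D.bR.relR := by
    rw [← h5]; exact Submodule.sub_mem _ h1 h2
  have h4 := cT_kill D hD h3
  simp only [map_sub, cT_tmul D hD, eps_t_apply D hD, hD.isR.ε_one, hD.isR.t_one, mul_one,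
    one_mul] at h4
  exact (sub_eq_zero.mp h4).symm

private lemma relR_mul_tr (ρ : R) {w : H ⊗[k] H} (hw : w ∈ D.bR.relR) :
    w * (D.bR.t ρ ⊗ₜ[k] (1:H)) ∈ D.bR.relR := by
  have key : ∀ z ∈ D.bR.relR, (LinearMap.mulRight k (D.bR.t ρ ⊗ₜ[k] (1:H))) z ∈ D.bR.relR := by
    refine memSpan _ ?_
    rintro z ⟨r, x, y, rfl⟩
    simp only [LinearMap.mulRight_apply, sub_mul, Algebra.TensorProduct.tmul_mul_tmul, mul_one]
    rw [mul_assoc x, hD.isR.st_comm, ← mul_assoc]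
    exact relR_gen D hD r (x * D.bR.t ρ) y
  exact key w hw

private lemma takStd (b : H) (σ : R) :
    (D.bR.s σ ⊗ₜ[k] (1:H)) * D.bR.Δ b - (1 ⊗ₜ[k] D.bR.t σ) * D.bR.Δ b ∈ D.bR.relR := by
  have h := hD.isR.takeuchi b σ
  rw [s_eq_t D hD σ] at h ⊢
  exact h

private lemma relR_absorb {w : H ⊗[k] H} (hw : w ∈ D.bR.relR) (b : H) :
    w * D.bR.Δ b ∈ D.bR.relR := by
  have key : ∀ z ∈ D.bR.relR, (LinearMap.mulRight k (D.bR.Δ b)) z ∈ D.bR.relR := by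
    refine memSpan _ ?_
    rintro z ⟨r, x, y, rfl⟩
    have e1 : ((x * D.bR.s r) ⊗ₜ[k] y - x ⊗ₜ[k] (y * D.bR.t r)) * D.bR.Δ b
        = (x ⊗ₜ[k] y) *
          ((D.bR.s r ⊗ₜ[k] (1:H)) * D.bR.Δ b - (1 ⊗ₜ[k] D.bR.t r) * D.bR.Δ b) := by
      rw [mul_sub, sub_mul, ← mul_assoc, ← mul_assoc]
      simp only [Algebra.TensorProduct.tmul_mul_tmul, mul_one, one_mul]
    simpa only [LinearMap.mulRight_apply, e1] using
      relR_mul_left D hD (x ⊗ₜ[k] y) (takStd D hD b r)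
  exact key w hw

private lemma Δt_approx (ρ : R) : D.bR.Δ (D.bR.t ρ) - D.bR.t ρ ⊗ₜ[k] (1:H) ∈ D.bR.relR := by
  have h1 := hD.isR.Δ_t ρ 1
  rw [one_mul] at h1
  have h2 := relR_mul_tr D hD ρ hD.isR.Δ_one
  have e : D.bR.Δ (D.bR.t ρ) - D.bR.t ρ ⊗ₜ[k] (1:H)
      = (D.bR.Δ (D.bR.t ρ) - D.bR.Δ 1 * (D.bR.t ρ ⊗ₜ[k] (1:H)))
        + (D.bR.Δ 1 - 1 ⊗ₜ[k] 1) * (D.bR.t ρ ⊗ₜ[k] (1:H)) := by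
    rw [sub_mul]
    simp only [Algebra.TensorProduct.tmul_mul_tmul, one_mul, mul_one]
    abel
  rw [e]; exact Submodule.add_mem _ h1 h2

private lemma P1 (ρ : R) (b : H) :
    D.bR.Δ (D.bR.t ρ * b) - (D.bR.t ρ ⊗ₜ[k] (1:H)) * D.bR.Δ b ∈ D.bR.relR := by
  have h1 := hD.isR.Δ_mul (D.bR.t ρ) b
  have h2 := relR_absorb D hD (Δt_approx D hD ρ) b
  have e : D.bR.Δ (D.bR.t ρ * b) - (D.bR.t ρ ⊗ₜ[k] (1:H)) * D.bR.Δ b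
      = (D.bR.Δ (D.bR.t ρ * b) - D.bR.Δ (D.bR.t ρ) * D.bR.Δ b)
        + (D.bR.Δ (D.bR.t ρ) - D.bR.t ρ ⊗ₜ[k] (1:H)) * D.bR.Δ b := by
    rw [sub_mul]; abel
  rw [e]; exact Submodule.add_mem _ h1 h2

private lemma relL_gen (l : L) (x y : H) :
    (D.bL.t l * x) ⊗ₜ[k] y - x ⊗ₜ[k] (D.bL.s l * y) ∈ D.bL.relL :=
  Submodule.subset_span ⟨l, x, y, rfl⟩

private lemma relL_mul_right {w : H ⊗[k] H} (hw : w ∈ D.bL.relL) (u : H ⊗[k] H) :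
    w * u ∈ D.bL.relL := by
  have key : ∀ z ∈ D.bL.relL, (LinearMap.mulRight k u) z ∈ D.bL.relL := by
    refine memSpan _ ?_
    rintro z ⟨l, x, y, rfl⟩
    have h2 : ∀ v : H ⊗[k] H,
        (LinearMap.mulLeft k ((D.bL.t l * x) ⊗ₜ[k] y - x ⊗ₜ[k] (D.bL.s l * y))) v
          ∈ D.bL.relL := by
      refine memTensor _ ?_
      intro p q
      simp only [LinearMap.mulLeft_apply, sub_mul, Algebra.TensorProduct.tmul_mul_tmul,
        mul_assoc]
      exact relL_gen D hD l (x*p) (y*q)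
    simpa only [LinearMap.mulRight_apply, LinearMap.mulLeft_apply] using h2 u
  exact key w hw

private lemma relL_mul_sl (l : L) {w : H ⊗[k] H} (hw : w ∈ D.bL.relL) :
    (D.bL.s l ⊗ₜ[k] (1:H)) * w ∈ D.bL.relL := by
  have key : ∀ z ∈ D.bL.relL,
      (LinearMap.mulLeft k (D.bL.s l ⊗ₜ[k] (1:H))) z ∈ D.bL.relL := by
    refine memSpan _ ?_
    rintro z ⟨m, x, y, rfl⟩
    simp only [LinearMap.mulLeft_apply, mul_sub, Algebra.TensorProduct.tmul_mul_tmul, one_mul]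
    rw [← mul_assoc, hD.isL.st_comm, mul_assoc]
    exact relL_gen D hD m (D.bL.s l * x) y
  exact key w hw

private lemma relL_absorb (b : H) {w : H ⊗[k] H} (hw : w ∈ D.bL.relL) :
    D.bL.Δ b * w ∈ D.bL.relL := by
  have key : ∀ z ∈ D.bL.relL, (LinearMap.mulLeft k (D.bL.Δ b)) z ∈ D.bL.relL := by
    refine memSpan _ ?_
    rintro z ⟨l, x, y, rfl⟩
    have e1 : D.bL.Δ b * ((D.bL.t l * x) ⊗ₜ[k] y - x ⊗ₜ[k] (D.bL.s l * y))
        = (D.bL.Δ b * (D.bL.t l ⊗ₜ[k] (1:H)) - D.bL.Δ b * (1 ⊗ₜ[k] D.bL.s l))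
            * (x ⊗ₜ[k] y) := by
      rw [mul_sub, sub_mul, mul_assoc, mul_assoc]
      simp only [Algebra.TensorProduct.tmul_mul_tmul, mul_one, one_mul]
    simpa only [LinearMap.mulLeft_apply, e1] using
      relL_mul_right D hD (hD.isL.takeuchi b l) (x ⊗ₜ[k] y)
  exact key w hw

private lemma Δsl_approx (l : L) :
    D.bL.Δ (D.bL.s l) - D.bL.s l ⊗ₜ[k] (1:H) ∈ D.bL.relL := by
  have h1 := hD.isL.Δ_s l 1
  rw [mul_one] at h1
  have h2 := relL_mul_sl D hD l hD.isL.Δ_one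
  have e : D.bL.Δ (D.bL.s l) - D.bL.s l ⊗ₜ[k] (1:H)
      = (D.bL.Δ (D.bL.s l) - (D.bL.s l ⊗ₜ[k] (1:H)) * D.bL.Δ 1)
        + (D.bL.s l ⊗ₜ[k] (1:H)) * (D.bL.Δ 1 - 1 ⊗ₜ[k] 1) := by
    rw [mul_sub]
    simp only [Algebra.TensorProduct.tmul_mul_tmul, one_mul, mul_one]
    abel
  rw [e]; exact Submodule.add_mem _ h1 h2

private lemma P3 (ρ : R) (b : H) :
    D.bL.Δ (b * D.bR.t ρ) - D.bL.Δ b * (D.bR.t ρ ⊗ₜ[k] (1:H)) ∈ D.bL.relL := by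
  have hc := hD.comp1 ρ
  rw [← hc]
  have h1 := hD.isL.Δ_mul b (D.bL.s (D.bL.ε (D.bR.t ρ)))
  have h2 := relL_absorb D hD b (Δsl_approx D hD (D.bL.ε (D.bR.t ρ)))
  have e : D.bL.Δ (b * D.bL.s (D.bL.ε (D.bR.t ρ)))
        - D.bL.Δ b * (D.bL.s (D.bL.ε (D.bR.t ρ)) ⊗ₜ[k] (1:H))
      = (D.bL.Δ (b * D.bL.s (D.bL.ε (D.bR.t ρ)))
          - D.bL.Δ b * D.bL.Δ (D.bL.s (D.bL.ε (D.bR.t ρ))))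
        + D.bL.Δ b * (D.bL.Δ (D.bL.s (D.bL.ε (D.bR.t ρ)))
            - D.bL.s (D.bL.ε (D.bR.t ρ)) ⊗ₜ[k] (1:H)) := by
    rw [mul_sub]; abel
  rw [e]; exact Submodule.add_mem _ h1 h2

private lemma relOver_gen {u : H} (hu : u ∈ Set.range D.bR.t) (a a' : H) :
    (a * u) ⊗ₜ[k] a' - a ⊗ₜ[k] (u * a') ∈ relOver k (Set.range D.bR.t) :=
  Submodule.subset_span ⟨u, hu, a, a', rfl⟩

private lemma relOver_mul_left (c : H) {w : H ⊗[k] H}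
    (hw : w ∈ relOver k (Set.range D.bR.t)) :
    (c ⊗ₜ[k] (1:H)) * w ∈ relOver k (Set.range D.bR.t) := by
  have key : ∀ z ∈ relOver k (Set.range D.bR.t),
      (LinearMap.mulLeft k (c ⊗ₜ[k] (1:H))) z ∈ relOver k (Set.range D.bR.t) := by
    refine memSpan _ ?_
    rintro z ⟨b, hb, a, a', rfl⟩
    simp only [LinearMap.mulLeft_apply, mul_sub, Algebra.TensorProduct.tmul_mul_tmul, one_mul,
      ← mul_assoc]
    exact relOver_gen D hD hb (c*a) a'
  exact key w hw


private def phi0 : H ⊗[k] (H ⊗[k] H) →ₗ[k] H ⊗[k] H :=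
  TensorProduct.lift
  { toFun := fun a => LinearMap.mulLeft k (a ⊗ₜ[k] (1:H))
    map_add' := fun a b => LinearMap.ext fun u => by
      simp [TensorProduct.add_tmul, add_mul]
    map_smul' := fun c a => LinearMap.ext fun u => by
      simp only [LinearMap.mulLeft_apply, RingHom.id_apply, LinearMap.smul_apply]
      rw [← TensorProduct.smul_tmul', smul_mul_assoc] }

omit hD in private lemma phi0_tmul (a : H) (u : H ⊗[k] H) :
    (phi0 : H ⊗[k] (H ⊗[k] H) →ₗ[k] H ⊗[k] H) (a ⊗ₜ[k] u) = (a ⊗ₜ[k] (1:H)) * u := by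
  simp only [phi0, TensorProduct.lift.tmul, LinearMap.coe_mk, AddHom.coe_mk,
    LinearMap.mulLeft_apply]

private def betaR : H ⊗[k] H →ₗ[k] H ⊗[k] H :=
  phi0.comp (TensorProduct.map LinearMap.id D.bR.Δ)

private def betaS : H ⊗[k] H →ₗ[k] H ⊗[k] H :=
  phi0.comp (TensorProduct.map LinearMap.id
    ((TensorProduct.map D.anti LinearMap.id).comp D.bL.Δ))

omit hD in private lemma betaR_tmul (a a' : H) :
    betaR D (a ⊗ₜ[k] a') = (a ⊗ₜ[k] (1:H)) * D.bR.Δ a' := by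
  simp [betaR, phi0_tmul]

omit hD in private lemma betaS_tmul (a a' : H) :
    betaS D (a ⊗ₜ[k] a')
      = (a ⊗ₜ[k] (1:H)) * (TensorProduct.map D.anti LinearMap.id (D.bL.Δ a')) := by
  simp [betaS, phi0_tmul]

omit hD in private lemma betaR_leftmul (c : H) (w : H ⊗[k] H) :
    betaR D ((c ⊗ₜ[k] (1:H)) * w) = (c ⊗ₜ[k] (1:H)) * betaR D w := by
  refine TensorProduct.induction_on w ?_ ?_ ?_
  · simp
  · intro p q
    rw [Algebra.TensorProduct.tmul_mul_tmul, one_mul, betaR_tmul, betaR_tmul, ← mul_assoc,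
      Algebra.TensorProduct.tmul_mul_tmul, one_mul]
  · intro u v hu hv
    rw [mul_add, map_add, map_add, mul_add, hu, hv]

omit hD in private lemma betaS_leftmul (c : H) (w : H ⊗[k] H) :
    betaS D ((c ⊗ₜ[k] (1:H)) * w) = (c ⊗ₜ[k] (1:H)) * betaS D w := by
  refine TensorProduct.induction_on w ?_ ?_ ?_
  · simp
  · intro p q
    rw [Algebra.TensorProduct.tmul_mul_tmul, one_mul, betaS_tmul, betaS_tmul, ← mul_assoc,
      Algebra.TensorProduct.tmul_mul_tmul, one_mul]
  · intro u v hu hv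
    rw [mul_add, map_add, map_add, mul_add, hu, hv]

private lemma betaR_relOver {w : H ⊗[k] H} (hw : w ∈ relOver k (Set.range D.bR.t)) :
    betaR D w ∈ D.bR.relR := by
  refine memSpan (betaR D) ?_ w hw
  rintro z ⟨b, ⟨ρ, rfl⟩, a, a', rfl⟩
  rw [map_sub, betaR_tmul, betaR_tmul]
  have e : (a * D.bR.t ρ) ⊗ₜ[k] (1:H) = (a ⊗ₜ[k] (1:H)) * (D.bR.t ρ ⊗ₜ[k] (1:H)) := by
    rw [Algebra.TensorProduct.tmul_mul_tmul, one_mul]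
  rw [e, mul_assoc, ← mul_sub]
  have hm : (D.bR.t ρ ⊗ₜ[k] (1:H)) * D.bR.Δ a' - D.bR.Δ (D.bR.t ρ * a') ∈ D.bR.relR := by
    have h := Submodule.neg_mem _ (P1 D hD ρ a'); rwa [neg_sub] at h
  exact relR_mul_left D hD _ hm

private lemma theta_relL (x : H) {w : H ⊗[k] H} (hw : w ∈ D.bL.relL) :
    (x ⊗ₜ[k] (1:H)) * (TensorProduct.map D.anti LinearMap.id w)
      ∈ relOver k (Set.range D.bR.t) := by
  have key : ∀ z ∈ D.bL.relL,
      ((LinearMap.mulLeft k (x ⊗ₜ[k] (1:H))).comp (TensorProduct.map D.anti LinearMap.id)) z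
        ∈ relOver k (Set.range D.bR.t) := by
    refine memSpan _ ?_
    rintro z ⟨l, u, v, rfl⟩
    simp only [LinearMap.comp_apply, map_sub, TensorProduct.map_tmul, LinearMap.id_coe, id_eq,
      LinearMap.mulLeft_apply, mul_sub, Algebra.TensorProduct.tmul_mul_tmul, one_mul]
    rw [hD.anti_tL l u, ← mul_assoc]
    exact relOver_gen D hD ⟨D.bR.ε (D.bL.s l), hD.comp4 l⟩ (x * D.anti u) v
  simpa using key w hw

private lemma betaS_relR {w : H ⊗[k] H} (hw : w ∈ D.bR.relR) :
    betaS D w ∈ relOver k (Set.range D.bR.t) := by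
  refine memSpan (betaS D) ?_ w hw
  rintro z ⟨σ, x, y, rfl⟩
  rw [map_sub, betaS_tmul, betaS_tmul]
  have claim1 : ∀ V : H ⊗[k] H,
      ((x * D.bR.s σ) ⊗ₜ[k] (1:H)) * (TensorProduct.map D.anti LinearMap.id V)
        = (x ⊗ₜ[k] (1:H)) *
          (TensorProduct.map D.anti LinearMap.id (V * (D.bR.t σ ⊗ₜ[k] (1:H)))) := by
    intro V
    refine TensorProduct.induction_on V ?_ ?_ ?_
    · simp
    · intro p q
      simp only [TensorProduct.map_tmul, Algebra.TensorProduct.tmul_mul_tmul, mul_one,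
        LinearMap.id_coe, id_eq, one_mul]
      rw [hD.anti_tR' σ p, ← mul_assoc]
    · intro u v hu hv
      simp only [map_add, add_mul, mul_add, hu, hv]
  rw [claim1 (D.bL.Δ y), ← mul_sub, ← map_sub]
  have hP3 : D.bL.Δ y * (D.bR.t σ ⊗ₜ[k] (1:H)) - D.bL.Δ (y * D.bR.t σ) ∈ D.bL.relL := by
    have h := Submodule.neg_mem _ (P3 D hD σ y); rwa [neg_sub] at h
  exact theta_relL D hD x hP3

private def F1 : H ⊗[k] (H ⊗[k] H) →ₗ[k] H ⊗[k] H :=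
  phi0.comp (TensorProduct.map D.anti (LinearMap.id : H ⊗[k] H →ₗ[k] H ⊗[k] H))

omit hD in private lemma F1_tmul (p : H) (u : H ⊗[k] H) :
    F1 D (p ⊗ₜ[k] u) = (D.anti p ⊗ₜ[k] (1:H)) * u := by
  simp [F1, phi0_tmul]

private def F2 : H ⊗[k] (H ⊗[k] H) →ₗ[k] H ⊗[k] H :=
  phi0.comp (TensorProduct.map LinearMap.id (TensorProduct.map D.anti LinearMap.id))

omit hD in private lemma F2_tmul (p : H) (u : H ⊗[k] H) :
    F2 D (p ⊗ₜ[k] u)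
      = (p ⊗ₜ[k] (1:H)) * (TensorProduct.map D.anti LinearMap.id u) := by
  simp [F2, phi0_tmul]

omit hD in private lemma cSL_tmul (x y : H) : D.bL.cS (x ⊗ₜ[k] y) = D.bL.s (D.bL.ε x) * y := by
  simp [LBgd.cS, TensorProduct.lift.tmul, LinearMap.mul_apply']

-- betaR ∘ (map S id) = F1 ∘ (map id Δ_R)
omit hD in private lemma b1 (Z : H ⊗[k] H) :
    betaR D (TensorProduct.map D.anti LinearMap.id Z)
      = F1 D (TensorProduct.map LinearMap.id D.bR.Δ Z) := by
  refine TensorProduct.induction_on Z ?_ ?_ ?_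
  · simp
  · intro p q
    simp only [TensorProduct.map_tmul, LinearMap.id_coe, id_eq, betaR_tmul, F1_tmul]
  · intro u v hu hv; simp only [map_add, hu, hv]

-- betaS = F2 ∘ (map id Δ_L)
omit hD in private lemma c1 (Z : H ⊗[k] H) :
    betaS D Z = F2 D (TensorProduct.map LinearMap.id D.bL.Δ Z) := by
  refine TensorProduct.induction_on Z ?_ ?_ ?_
  · simp
  · intro p q
    simp only [TensorProduct.map_tmul, LinearMap.id_coe, id_eq, betaS_tmul, F2_tmul]
  · intro u v hu hv; simp only [map_add, hu, hv]

omit hD in private lemma F1_assoc (V : H ⊗[k] H) (w : H) :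
    F1 D ((TensorProduct.assoc k H H H) (V ⊗ₜ[k] w))
      = (LinearMap.mul' k H (TensorProduct.map D.anti LinearMap.id V)) ⊗ₜ[k] w := by
  refine TensorProduct.induction_on V ?_ ?_ ?_
  · simp
  · intro p q
    simp only [TensorProduct.assoc_tmul, F1_tmul, TensorProduct.map_tmul, LinearMap.id_coe,
      id_eq, LinearMap.mul'_apply, Algebra.TensorProduct.tmul_mul_tmul, one_mul]
  · intro u v hu hv
    simp only [TensorProduct.add_tmul, map_add, hu, hv]

omit hD in private lemma F2_assoc (V : H ⊗[k] H) (w : H) :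
    F2 D ((TensorProduct.assoc k H H H) (V ⊗ₜ[k] w))
      = (LinearMap.mul' k H (TensorProduct.map LinearMap.id D.anti V)) ⊗ₜ[k] w := by
  refine TensorProduct.induction_on V ?_ ?_ ?_
  · simp
  · intro p q
    simp only [TensorProduct.assoc_tmul, F2_tmul, TensorProduct.map_tmul, LinearMap.id_coe,
      id_eq, LinearMap.mul'_apply, Algebra.TensorProduct.tmul_mul_tmul, one_mul]
  · intro u v hu hv
    simp only [TensorProduct.add_tmul, map_add, hu, hv]

private lemma F1_assoc_DL (Z : H ⊗[k] H) :
    F1 D ((TensorProduct.assoc k H H H) (TensorProduct.map D.bL.Δ LinearMap.id Z))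
      = TensorProduct.map (D.bR.s.comp D.bR.ε) LinearMap.id Z := by
  refine TensorProduct.induction_on Z ?_ ?_ ?_
  · simp
  · intro u w
    simp only [TensorProduct.map_tmul, LinearMap.id_coe, id_eq, LinearMap.comp_apply]
    rw [F1_assoc D (D.bL.Δ u) w, hD.anti_left u]
  · intro u v hu hv; simp only [map_add, hu, hv]

private lemma F2_assoc_DR (Z : H ⊗[k] H) :
    F2 D ((TensorProduct.assoc k H H H) (TensorProduct.map D.bR.Δ LinearMap.id Z))
      = TensorProduct.map (D.bL.s.comp D.bL.ε) LinearMap.id Z := by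
  refine TensorProduct.induction_on Z ?_ ?_ ?_
  · simp
  · intro u w
    simp only [TensorProduct.map_tmul, LinearMap.id_coe, id_eq, LinearMap.comp_apply]
    rw [F2_assoc D (D.bR.Δ u) w, hD.anti_right u]
  · intro u v hu hv; simp only [map_add, hu, hv]

private lemma F1_relLR3 {w : H ⊗[k] (H ⊗[k] H)} (hw : w ∈ D.relLR3) :
    F1 D w ∈ D.bR.relR := by
  refine memSpan (F1 D) ?_ w hw
  rintro z (⟨l, x, y, w, rfl⟩ | ⟨σ, x, y, w, rfl⟩)
  · rw [map_sub, F1_tmul, F1_tmul, hD.anti_tL l x]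
    simp only [Algebra.TensorProduct.tmul_mul_tmul, one_mul, mul_assoc, sub_self]
    exact (D.bR.relR).zero_mem
  · rw [map_sub, F1_tmul, F1_tmul]
    simp only [Algebra.TensorProduct.tmul_mul_tmul, one_mul, ← mul_assoc]
    exact relR_gen D hD σ (D.anti x * y) w

private lemma F2_relRL3 {w : H ⊗[k] (H ⊗[k] H)} (hw : w ∈ D.relRL3) :
    F2 D w ∈ relOver k (Set.range D.bR.t) := by
  refine memSpan (F2 D) ?_ w hw
  rintro z (⟨σ, x, y, w, rfl⟩ | ⟨l, x, y, w, rfl⟩)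
  · rw [map_sub, F2_tmul, F2_tmul]
    simp only [TensorProduct.map_tmul, LinearMap.id_coe, id_eq,
      Algebra.TensorProduct.tmul_mul_tmul, one_mul, hD.anti_tR' σ y, mul_assoc, sub_self]
    exact Submodule.zero_mem _
  · rw [map_sub, F2_tmul, F2_tmul]
    simp only [TensorProduct.map_tmul, LinearMap.id_coe, id_eq,
      Algebra.TensorProduct.tmul_mul_tmul, one_mul, hD.anti_tL l y]
    rw [← mul_assoc]
    exact relOver_gen D hD ⟨D.bR.ε (D.bL.s l), hD.comp4 l⟩ (x * D.anti y) w

private lemma q1core (h h' : H) :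
    betaR D (betaS D (h ⊗ₜ[k] h')) - h ⊗ₜ[k] h' ∈ D.bR.relR := by
  have hM := hD.mixed1 h'
  have hF1M := F1_relLR3 D hD hM
  have hcore : ∀ Z : H ⊗[k] H,
      (h ⊗ₜ[k] (1:H)) * (TensorProduct.map (D.bR.s.comp D.bR.ε) LinearMap.id Z)
        - (TensorProduct.mk k H H h) (D.bR.cT Z) ∈ D.bR.relR := by
    refine memTensor (LinearMap.mulLeft k (h ⊗ₜ[k] (1:H)) ∘ₗ
      TensorProduct.map (D.bR.s.comp D.bR.ε) LinearMap.id
      - (TensorProduct.mk k H H h) ∘ₗ D.bR.cT) ?_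
    intro u w
    simp only [LinearMap.sub_apply, LinearMap.comp_apply, TensorProduct.map_tmul,
      LinearMap.id_coe, id_eq, LinearMap.mulLeft_apply, cT_tmul D hD,
      Algebra.TensorProduct.tmul_mul_tmul, one_mul, TensorProduct.mk_apply]
    exact relR_gen D hD (D.bR.ε u) h w
  have e1 : betaR D (betaS D (h ⊗ₜ[k] h'))
      = (h ⊗ₜ[k] (1:H)) * (F1 D (TensorProduct.map LinearMap.id D.bR.Δ (D.bL.Δ h'))) := by
    rw [betaS_tmul, betaR_leftmul, b1]
  have e3 : (TensorProduct.mk k H H h) (D.bR.cT (D.bR.Δ h')) = h ⊗ₜ[k] h' := by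
    rw [hD.isR.counit_t h', TensorProduct.mk_apply]
  have e2 : F1 D (TensorProduct.map LinearMap.id D.bR.Δ (D.bL.Δ h'))
      = TensorProduct.map (D.bR.s.comp D.bR.ε) LinearMap.id (D.bR.Δ h')
        - F1 D ((TensorProduct.assoc k H H H)
            ((TensorProduct.map D.bL.Δ LinearMap.id) (D.bR.Δ h'))
          - (TensorProduct.map LinearMap.id D.bR.Δ) (D.bL.Δ h')) := by
    rw [map_sub, F1_assoc_DL D hD (D.bR.Δ h')]
    abel
  have efin : betaR D (betaS D (h ⊗ₜ[k] h')) - h ⊗ₜ[k] h'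
      = ((h ⊗ₜ[k] (1:H))
            * (TensorProduct.map (D.bR.s.comp D.bR.ε) LinearMap.id (D.bR.Δ h'))
          - (TensorProduct.mk k H H h) (D.bR.cT (D.bR.Δ h')))
        - (h ⊗ₜ[k] (1:H)) * (F1 D ((TensorProduct.assoc k H H H)
            ((TensorProduct.map D.bL.Δ LinearMap.id) (D.bR.Δ h'))
          - (TensorProduct.map LinearMap.id D.bR.Δ) (D.bL.Δ h'))) := by
    rw [e1, e2, e3, mul_sub]
    abel
  rw [efin]
  exact Submodule.sub_mem _ (hcore (D.bR.Δ h')) (relR_mul_left D hD _ hF1M)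

private lemma q2core (a a' : H) :
    betaS D (betaR D (a ⊗ₜ[k] a')) - a ⊗ₜ[k] a' ∈ relOver k (Set.range D.bR.t) := by
  have hM := hD.mixed2 a'
  have hF2M := F2_relRL3 D hD hM
  have hcore : ∀ Z : H ⊗[k] H,
      (a ⊗ₜ[k] (1:H)) * (TensorProduct.map (D.bL.s.comp D.bL.ε) LinearMap.id Z)
        - (TensorProduct.mk k H H a) (D.bL.cS Z) ∈ relOver k (Set.range D.bR.t) := by
    refine memTensor (LinearMap.mulLeft k (a ⊗ₜ[k] (1:H)) ∘ₗ
      TensorProduct.map (D.bL.s.comp D.bL.ε) LinearMap.id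
      - (TensorProduct.mk k H H a) ∘ₗ D.bL.cS) ?_
    intro u w
    simp only [LinearMap.sub_apply, LinearMap.comp_apply, TensorProduct.map_tmul,
      LinearMap.id_coe, id_eq, LinearMap.mulLeft_apply, cSL_tmul,
      Algebra.TensorProduct.tmul_mul_tmul, one_mul, TensorProduct.mk_apply]
    exact relOver_gen D hD ⟨D.bR.ε (D.bL.s (D.bL.ε u)), hD.comp4 (D.bL.ε u)⟩ a w
  have e1 : betaS D (betaR D (a ⊗ₜ[k] a'))
      = (a ⊗ₜ[k] (1:H)) * (F2 D (TensorProduct.map LinearMap.id D.bL.Δ (D.bR.Δ a'))) := by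
    rw [betaR_tmul, betaS_leftmul, c1]
  have e3 : (TensorProduct.mk k H H a) (D.bL.cS (D.bL.Δ a')) = a ⊗ₜ[k] a' := by
    rw [hD.isL.counit_s a', TensorProduct.mk_apply]
  have e2 : F2 D (TensorProduct.map LinearMap.id D.bL.Δ (D.bR.Δ a'))
      = TensorProduct.map (D.bL.s.comp D.bL.ε) LinearMap.id (D.bL.Δ a')
        - F2 D ((TensorProduct.assoc k H H H)
            ((TensorProduct.map D.bR.Δ LinearMap.id) (D.bL.Δ a'))
          - (TensorProduct.map LinearMap.id D.bL.Δ) (D.bR.Δ a')) := by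
    rw [map_sub, F2_assoc_DR D hD (D.bL.Δ a')]
    abel
  have efin : betaS D (betaR D (a ⊗ₜ[k] a')) - a ⊗ₜ[k] a'
      = ((a ⊗ₜ[k] (1:H))
            * (TensorProduct.map (D.bL.s.comp D.bL.ε) LinearMap.id (D.bL.Δ a'))
          - (TensorProduct.mk k H H a) (D.bL.cS (D.bL.Δ a')))
        - (a ⊗ₜ[k] (1:H)) * (F2 D ((TensorProduct.assoc k H H H)
            ((TensorProduct.map D.bR.Δ LinearMap.id) (D.bL.Δ a'))
          - (TensorProduct.map LinearMap.id D.bL.Δ) (D.bR.Δ a'))) := by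
    rw [e1, e2, e3, mul_sub]
    abel
  rw [efin]
  exact Submodule.sub_mem _ (hcore (D.bL.Δ a')) (relOver_mul_left D hD a hF2M)

omit hD in private lemma mapLeft_eq (a : H) (Z : H ⊗[k] H) :
    TensorProduct.map (LinearMap.mulLeft k a) LinearMap.id Z = (a ⊗ₜ[k] (1:H)) * Z := by
  refine TensorProduct.induction_on Z ?_ ?_ ?_
  · simp
  · intro x y
    simp only [TensorProduct.map_tmul, LinearMap.mulLeft_apply, LinearMap.id_coe, id_eq,
      Algebra.TensorProduct.tmul_mul_tmul, one_mul]
  · intro u v hu hv; simp only [map_add, mul_add, hu, hv]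

omit hD in private lemma mapRight_eq (c : H) (Z : H ⊗[k] H) :
    TensorProduct.map LinearMap.id (LinearMap.mulRight k c) Z = Z * ((1:H) ⊗ₜ[k] c) := by
  refine TensorProduct.induction_on Z ?_ ?_ ?_
  · simp
  · intro x y
    simp only [TensorProduct.map_tmul, LinearMap.mulRight_apply, LinearMap.id_coe, id_eq,
      Algebra.TensorProduct.tmul_mul_tmul, mul_one]
  · intro u v hu hv; simp only [map_add, add_mul, hu, hv]

omit hD in private lemma mapLS_eq (h : H) (Z : H ⊗[k] H) :
    TensorProduct.map ((LinearMap.mulLeft k h).comp D.anti) LinearMap.id Z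
      = (h ⊗ₜ[k] (1:H)) * (TensorProduct.map D.anti LinearMap.id Z) := by
  refine TensorProduct.induction_on Z ?_ ?_ ?_
  · simp
  · intro x y
    simp only [TensorProduct.map_tmul, LinearMap.comp_apply, LinearMap.mulLeft_apply,
      LinearMap.id_coe, id_eq, Algebra.TensorProduct.tmul_mul_tmul, one_mul]
  · intro u v hu hv; simp only [map_add, mul_add, hu, hv]

private lemma q1all (z : H ⊗[k] H) : betaR D (betaS D z) - z ∈ D.bR.relR := by
  have h := memTensor ((betaR D).comp (betaS D) - LinearMap.id) (W := D.bR.relR) ?_ z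
  · simpa using h
  · intro x y
    simpa using q1core D hD x y

private lemma q2all (z : H ⊗[k] H) :
    betaS D (betaR D z) - z ∈ relOver k (Set.range D.bR.t) := by
  have h := memTensor ((betaS D).comp (betaR D) - LinearMap.id)
    (W := relOver k (Set.range D.bR.t)) ?_ z
  · simpa using h
  · intro x y
    simpa using q2core D hD x y

end Aux
end HopfAlgd

open HopfAlgd TensorProduct in
/-- For a Hopf algebroid `𝓗`, the total algebra `H` is a right
`𝓗_R`-comodule algebra via `γ_R`, its coinvariants are `t_R(R)`, and the canonical
map `H ⊗_{R^op} H → H ⊗_R H`, `h ⊗ h' ↦ h h'⁽¹⁾ ⊗ h'⁽²⁾` is bijective with inverse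
`h ⊗ h' ↦ h S(h'₍₁₎) ⊗ h'₍₂₎`; that is, `t_R : R^op → H` is an `𝓗_R`-Galois
extension. -/
theorem stmt3 {k L R H : Type} [CommRing k] [Ring L] [Ring R] [Ring H]
    [Algebra k L] [Algebra k R] [Algebra k H]
    (D : HopfData k L R H) (hD : IsHopf D) :
    ∀ C : RComodData k R H H,
      C.ar = (LinearMap.mul k H).flip.comp D.bR.s →  -- `h · r = h s_R(r)`
      C.τ = D.bR.Δ →                                  -- coaction is the coproduct
      IsRComodAlg D.bR C ∧
      (C.coinv D.bR : Set H) = Set.range D.bR.t ∧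
      ∃ (can : ((H ⊗[k] H) ⧸ relOver k (Set.range D.bR.t)) →ₗ[k]
                ((H ⊗[k] H) ⧸ C.relM D.bR))
        (inv : ((H ⊗[k] H) ⧸ C.relM D.bR) →ₗ[k]
                ((H ⊗[k] H) ⧸ relOver k (Set.range D.bR.t))),
        IsCanR D.bR C (Set.range D.bR.t) can ∧
        (∀ (h h' : H), inv ((C.relM D.bR).mkQ (h ⊗ₜ[k] h'))
            = (relOver k (Set.range D.bR.t)).mkQ
                ((TensorProduct.map ((LinearMap.mulLeft k h).comp D.anti) LinearMap.id)
                  (D.bL.Δ h'))) ∧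
        Function.LeftInverse inv can ∧ Function.RightInverse inv can := by
  intro C har hτ
  obtain ⟨ar, τ⟩ := C
  have har' : ar = (LinearMap.mul k H).flip.comp D.bR.s := har
  have hτ' : τ = D.bR.Δ := hτ
  subst har' hτ'
  have hrelM : RComodData.relM D.bR
      ⟨(LinearMap.mul k H).flip.comp D.bR.s, D.bR.Δ⟩ = D.bR.relR := rfl
  refine ⟨⟨⟨?_, ?_, ?_, ?_, ?_⟩, ?_, ?_, ?_, ?_, ?_⟩, ?_, ?_⟩
  · -- ar_one
    intro m
    show m * D.bR.s 1 = m
    rw [hD.isR.s_one, mul_one]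
  · -- ar_mul
    intro r r' m
    show m * D.bR.s (r * r') = (m * D.bR.s r) * D.bR.s r'
    rw [hD.isR.s_mul, mul_assoc]
  · -- counit
    intro m
    exact hD.isR.counit_s m
  · -- rlin
    intro r m
    show D.bR.Δ (m * D.bR.s r)
      - (TensorProduct.map LinearMap.id (LinearMap.mulRight k (D.bR.s r))) (D.bR.Δ m)
        ∈ D.bR.relR
    rw [mapRight_eq]
    exact hD.isR.Δ_s r m
  · -- coassoc
    intro m
    exact hD.isR.coassoc m
  · -- coact_one
    exact hD.isR.Δ_one
  · -- coact_mul
    intro a a'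
    exact hD.isR.Δ_mul a a'
  · -- ar_eq
    intro r a
    show a * D.bR.s r = a * (1 * D.bR.s r)
    rw [one_mul]
  · -- coinv_mul
    intro a a' ha ha'
    rw [mem_coinv_iff] at ha ha' ⊢
    have ha1 : D.bR.Δ a - a ⊗ₜ[k] 1 ∈ D.bR.relR := ha
    have ha2 : D.bR.Δ a' - a' ⊗ₜ[k] 1 ∈ D.bR.relR := ha'
    show D.bR.Δ (a * a') - (a * a') ⊗ₜ[k] 1 ∈ D.bR.relR
    have key : D.bR.Δ (a * a') - (a * a') ⊗ₜ[k] (1:H)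
        = (D.bR.Δ (a * a') - D.bR.Δ a * D.bR.Δ a')
          + ((D.bR.Δ a - a ⊗ₜ[k] (1:H)) * D.bR.Δ a'
          + (a ⊗ₜ[k] (1:H)) * (D.bR.Δ a' - a' ⊗ₜ[k] (1:H))) := by
      rw [sub_mul, mul_sub, Algebra.TensorProduct.tmul_mul_tmul, mul_one]
      abel
    rw [key]
    exact Submodule.add_mem _ (hD.isR.Δ_mul a a')
      (Submodule.add_mem _ (relR_absorb D hD ha1 a') (relR_mul_left D hD _ ha2))
  · -- centr
    intro a a' ha
    rw [mem_coinv_iff] at ha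
    have ha1 : D.bR.Δ a - a ⊗ₜ[k] 1 ∈ D.bR.relR := ha
    show D.bR.Δ (a * a') - (a ⊗ₜ[k] (1:H)) * D.bR.Δ a' ∈ D.bR.relR
    have key : D.bR.Δ (a * a') - (a ⊗ₜ[k] (1:H)) * D.bR.Δ a'
        = (D.bR.Δ (a * a') - D.bR.Δ a * D.bR.Δ a')
          + (D.bR.Δ a - a ⊗ₜ[k] (1:H)) * D.bR.Δ a' := by
      rw [sub_mul]; abel
    rw [key]
    exact Submodule.add_mem _ (hD.isR.Δ_mul a a') (relR_absorb D hD ha1 a')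
  · -- coinvariants = range t
    ext m
    simp only [SetLike.mem_coe, mem_coinv_iff]
    constructor
    · intro hm
      have hm' : D.bR.Δ m - m ⊗ₜ[k] 1 ∈ D.bR.relR := hm
      have h0 := cT_kill D hD hm'
      rw [map_sub, hD.isR.counit_t m, cT_tmul D hD, sub_eq_zero] at h0
      rw [one_mul] at h0
      exact ⟨D.bR.ε m, h0.symm⟩
    · rintro ⟨r, rfl⟩
      show D.bR.Δ (D.bR.t r) - D.bR.t r ⊗ₜ[k] 1 ∈ D.bR.relR
      exact Δt_approx D hD r
  · -- the canonical map and its inverse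
    have hle1 : relOver k (Set.range D.bR.t)
        ≤ LinearMap.ker ((RComodData.relM D.bR
            ⟨(LinearMap.mul k H).flip.comp D.bR.s, D.bR.Δ⟩).mkQ.comp (betaR D)) := by
      intro w hw
      rw [LinearMap.mem_ker, LinearMap.comp_apply, Submodule.mkQ_apply,
        Submodule.Quotient.mk_eq_zero, hrelM]
      exact betaR_relOver D hD hw
    have hle2 : RComodData.relM D.bR
        ⟨(LinearMap.mul k H).flip.comp D.bR.s, D.bR.Δ⟩
        ≤ LinearMap.ker ((relOver k (Set.range D.bR.t)).mkQ.comp (betaS D)) := by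
      intro w hw
      rw [hrelM] at hw
      rw [LinearMap.mem_ker, LinearMap.comp_apply, Submodule.mkQ_apply,
        Submodule.Quotient.mk_eq_zero]
      exact betaS_relR D hD hw
    refine ⟨Submodule.liftQ _ _ hle1, Submodule.liftQ _ _ hle2, ?_, ?_, ?_, ?_⟩
    · -- IsCanR
      intro a a'
      rw [Submodule.mkQ_apply, Submodule.liftQ_apply, LinearMap.comp_apply,
        Submodule.mkQ_apply]
      have e : betaR D (a ⊗ₜ[k] a')
          = (TensorProduct.map (LinearMap.mulLeft k a) LinearMap.id) (D.bR.Δ a') := by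
        rw [betaR_tmul, mapLeft_eq]
      rw [e]; rfl
    · -- formula for inv
      intro h h'
      rw [Submodule.mkQ_apply, Submodule.liftQ_apply, LinearMap.comp_apply,
        Submodule.mkQ_apply]
      have e : betaS D (h ⊗ₜ[k] h')
          = (TensorProduct.map ((LinearMap.mulLeft k h).comp D.anti) LinearMap.id)
              (D.bL.Δ h') := by
        rw [betaS_tmul, mapLS_eq]
      rw [e]; rfl
    · -- LeftInverse
      intro q
      obtain ⟨z, rfl⟩ := Submodule.mkQ_surjective _ q
      rw [Submodule.mkQ_apply, Submodule.liftQ_apply, LinearMap.comp_apply,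
        Submodule.mkQ_apply, Submodule.liftQ_apply, LinearMap.comp_apply,
        Submodule.mkQ_apply, Submodule.Quotient.eq]
      exact q2all D hD z
    · -- RightInverse
      intro q
      obtain ⟨z, rfl⟩ := Submodule.mkQ_surjective _ q
      rw [Submodule.mkQ_apply, Submodule.liftQ_apply, LinearMap.comp_apply,
        Submodule.mkQ_apply, Submodule.liftQ_apply, LinearMap.comp_apply,
        Submodule.mkQ_apply, Submodule.Quotient.eq, hrelM]
      exact q1all D hD z
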